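/- Suppose A is block lower triangular, A = [[A₀, 0],[B̃C, Ã]], where A₀ + A₀ᵀ ≤ 0 and Ã + Ãᵀ ≤ 0 do not by themselves imply A + Aᵀ ≤ 0; however, if there exists a block-diagonal symmetric positive definite Q = diag(Q₀, Q̃) with QA + AᵀQ ≤ 0, then for any block-diagonal Galerkin projection V = diag(V₀, Ṽ) (after the co-energy transformation L with LᵀQL = I, L block diagonal), the reduced matrix Vᵀ(L⁻¹AL)V satisfies the Lyapunov inequality Vᵀ(L⁻¹AL)V + (Vᵀ(L⁻¹AL)V)ᵀ ≤ 0. -/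
import Mathlib


open Matrix

/-- For a block lower triangular system matrix, a block-diagonal positive definite
`Q` satisfying the Lyapunov inequality, a block-diagonal co-energy transformation
`L` with `LᵀQL = I`, and any block-diagonal Galerkin projection `V`, the reduced
matrix `Vᵀ(L⁻¹AL)V` satisfies the Lyapunov inequality. -/
theorem stmt_10 (n₀ n₁ r₀ r₁ : ℕ)
    (A₀ : Matrix (Fin n₀) (Fin n₀) ℝ) (At : Matrix (Fin n₁) (Fin n₁) ℝ)
    (BC : Matrix (Fin n₁) (Fin n₀) ℝ)
    (A : Matrix (Fin n₀ ⊕ Fin n₁) (Fin n₀ ⊕ Fin n₁) ℝ)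
    (hA : A = Matrix.fromBlocks A₀ 0 BC At)
    (Q₀ : Matrix (Fin n₀) (Fin n₀) ℝ) (Qt : Matrix (Fin n₁) (Fin n₁) ℝ)
    (Q : Matrix (Fin n₀ ⊕ Fin n₁) (Fin n₀ ⊕ Fin n₁) ℝ)
    (hQblock : Q = Matrix.fromBlocks Q₀ 0 0 Qt)
    (hQpd : Q.PosDef) (hQsym : Q.IsSymm)
    (hLyap : ∀ x : Fin n₀ ⊕ Fin n₁ → ℝ, x ⬝ᵥ (Q * A + Aᵀ * Q) *ᵥ x ≤ 0)
    (L₀ : Matrix (Fin n₀) (Fin n₀) ℝ) (Lt : Matrix (Fin n₁) (Fin n₁) ℝ)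
    (L : Matrix (Fin n₀ ⊕ Fin n₁) (Fin n₀ ⊕ Fin n₁) ℝ)
    (hLblock : L = Matrix.fromBlocks L₀ 0 0 Lt)
    (hL : IsUnit L) (hLQ : Lᵀ * Q * L = 1)
    (V₀ : Matrix (Fin n₀) (Fin r₀) ℝ) (Vt : Matrix (Fin n₁) (Fin r₁) ℝ)
    (V : Matrix (Fin n₀ ⊕ Fin n₁) (Fin r₀ ⊕ Fin r₁) ℝ)
    (hVblock : V = Matrix.fromBlocks V₀ 0 0 Vt) :
    ∀ y : Fin r₀ ⊕ Fin r₁ → ℝ,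
      y ⬝ᵥ ((Vᵀ * (L⁻¹ * A * L) * V) + (Vᵀ * (L⁻¹ * A * L) * V)ᵀ) *ᵥ y ≤ 0 := by
  intro y
  have hinv : L⁻¹ = Lᵀ * Q := by
    apply Matrix.inv_eq_left_inv
    rw [mul_assoc]; rw [mul_assoc] at hLQ; exact hLQ
  have hQ : Qᵀ = Q := hQsym
  have key : (Vᵀ * (L⁻¹ * A * L) * V) + (Vᵀ * (L⁻¹ * A * L) * V)ᵀ
      = (L * V)ᵀ * (Q * A + Aᵀ * Q) * (L * V) := by
    rw [hinv]
    simp only [Matrix.transpose_mul, Matrix.transpose_transpose, hQ]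
    simp only [Matrix.add_mul, Matrix.mul_add, Matrix.mul_assoc]
  rw [key]
  have := hLyap ((L * V) *ᵥ y)
  calc y ⬝ᵥ ((L * V)ᵀ * (Q * A + Aᵀ * Q) * (L * V)) *ᵥ y
      = ((L * V) *ᵥ y) ⬝ᵥ (Q * A + Aᵀ * Q) *ᵥ ((L * V) *ᵥ y) := by
        rw [← Matrix.mulVec_mulVec, ← Matrix.mulVec_mulVec,
          Matrix.dotProduct_mulVec, Matrix.vecMul_transpose]
    _ ≤ 0 := this
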